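/- arXiv:1805.08343 — 7 statements merged into one kernel-verified Lean document; each statement's English description precedes it below -/
import Mathlib

section
/- Let K be a field and let v, w ∈ K^n. There exists a permutation σ of {1,…,n} such that σ*v = w if and only if for every j = 1,…,n the j-th elementary symmetric polynomial evaluated at the entries of v equals the j-th elementary symmetric polynomial evaluated at the entries of w, i.e. e_j(v_1,…,v_n) = e_j(w_1,…,w_n) for all j. -/
/-!
A permutation of the entries does not change the multiset of entries, hence not its elementary
symmetric functions. Conversely, by Vieta's formulas the `e_j` of the entries of `v` determine
the polynomial `∏ i, (X - v i)`, whose multiset of roots is the multiset of entries of `v`.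
Two tuples with the same multiset of entries have fibres of equal size over every value, and
bijections between corresponding fibres glue to the required permutation.
-/

open Finset Polynomial

theorem Fintype.card_fiber_eq_count_map_univ {ι α : Type*} [Fintype ι] [DecidableEq α]
    (v : ι → α) (a : α) : Fintype.card {i // v i = a} = (univ.val.map v).count a := by
  rw [Multiset.count_map, Fintype.card_subtype]
  simp only [eq_comm, Finset.card_def, Finset.filter_val]

theorem exists_perm_comp_eq_iff_map_univ_eq {ι α : Type*} [Fintype ι] {v w : ι → α} :
    (∃ σ : Equiv.Perm ι, v ∘ σ = w) ↔ univ.val.map v = univ.val.map w := by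
  let _ := Classical.decEq α
  constructor
  · rintro ⟨σ, rfl⟩
    rw [← Multiset.map_map, Multiset.map_univ_val_equiv]
  · intro h
    have hfiber : ∀ a, Fintype.card {i // w i = a} = Fintype.card {i // v i = a} := fun a => by
      rw [Fintype.card_fiber_eq_count_map_univ, Fintype.card_fiber_eq_count_map_univ, h]
    let e := Equiv.ofFiberEquiv fun a => Fintype.equivOfCardEq (hfiber a)
    exact ⟨e, funext (Equiv.ofFiberEquiv_map _)⟩

theorem Multiset.eq_iff_esymm_eq_of_card_eq {R : Type*} [CommRing R] [IsDomain R]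
    {s t : Multiset R} (hcard : card s = card t) :
    s = t ↔ ∀ j, 1 ≤ j → j ≤ card s → s.esymm j = t.esymm j := by
  refine ⟨fun h _ _ _ => h ▸ rfl, fun h => ?_⟩
  have hprod : (s.map fun a => X - C a).prod = (t.map fun a => X - C a).prod := by
    rw [prod_X_sub_X_eq_sum_esymm, prod_X_sub_X_eq_sum_esymm, ← hcard]
    refine sum_congr rfl fun j hj => ?_
    rcases j.eq_zero_or_pos with rfl | hj0
    · simp [Multiset.esymm]
    · rw [h j hj0 (Nat.lt_succ_iff.mp (mem_range.mp hj))]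
  simpa only [roots_multiset_prod_X_sub_C] using congrArg roots hprod

/-- For vectors `v w : Fin n → K` over a field `K`, there is a
permutation `σ` with `σ * v = w` (where `(σ * v) i = v (σ i)`) iff for every
`j = 1, …, n` the `j`-th elementary symmetric polynomial of the entries of `v`
equals that of the entries of `w`. -/
theorem perm_iff_esymm_eq {K : Type*} [Field K] {n : ℕ} (v w : Fin n → K) :
    (∃ σ : Equiv.Perm (Fin n), (fun i => v (σ i)) = w) ↔
      (∀ j, 1 ≤ j → j ≤ n →
        (∑ s ∈ Finset.powersetCard j (Finset.univ : Finset (Fin n)), ∏ i ∈ s, v i) =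
        (∑ s ∈ Finset.powersetCard j (Finset.univ : Finset (Fin n)), ∏ i ∈ s, w i)) := by
  have hcard : ∀ f : Fin n → K, Multiset.card (univ.val.map f) = n := by simp
  simp only [← Finset.esymm_map_val]
  have hmap := Multiset.eq_iff_esymm_eq_of_card_eq ((hcard v).trans (hcard w).symm)
  rw [hcard v] at hmap
  exact exists_perm_comp_eq_iff_map_univ_eq.trans hmap
end

section
/- Let K be a field and v = (v_1,…,v_n) ∈ K^n. For each i let p_{i,v}(T) = ∏_{l≠i}(T−v_l), and let D_v(T) be the monic greatest common divisor of p_{1,v},…,p_{n,v}. Then for all indices i, j ∈ {1,…,n}: if v_i = v_j, then (p_{i,v}/D_v)(v_j) = ∏_b (v_j − b), where the product runs over the distinct values b of the entries of v with b ≠ v_j, and in particular this value is nonzero and does not depend on the choice of i with v_i = v_j; and if v_i ≠ v_j, then (p_{i,v}/D_v)(v_j) = 0. -/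
/-!
Write `c b` for the number of indices `l` with `v l = b`, and let `D` be the product of
`(X - b) ^ (c b - 1)` over the distinct values `b` of `v`. Then
`p_{i,v} = D * q_i` with `q_i = ∏_{b ≠ v i} (X - b)`, the product over the distinct values.
The `q_i` have no common root, since `q_l` does not vanish at `v l`; as they split, their gcd
is `1`, so `D_v = D` and `p_{i,v} / D_v = q_i`, whose value at `v j` is read off directly.
-/

open Polynomial

theorem Finset.gcd_eq_one_of_forall_exists_eval_ne_zero {K ι : Type*} [Field K] [DecidableEq K]
    {s : Finset ι} {f : ι → K[X]} {i₀ : ι} (hi₀ : i₀ ∈ s) (hsplits : (f i₀).Splits)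
    (hne : f i₀ ≠ 0) (hroot : ∀ a, ∃ i ∈ s, (f i).eval a ≠ 0) :
    s.gcd f = 1 := by
  rw [← Finset.normalize_gcd, normalize_eq_one, isUnit_iff_degree_eq_zero]
  by_contra hdeg
  obtain ⟨a, ha⟩ := (hsplits.of_dvd hne (Finset.gcd_dvd hi₀)).exists_eval_eq_zero hdeg
  obtain ⟨i, hi, hfi⟩ := hroot a
  obtain ⟨r, hr⟩ := Finset.gcd_dvd (f := f) hi
  exact hfi (by rw [hr, eval_mul, ha, zero_mul])

section DeletedProduct

open Finset

variable {K ι : Type*} [Field K] [DecidableEq K] [Fintype ι] (v : ι → K)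

noncomputable def deletedDistinctProduct (i : ι) : K[X] :=
  ∏ b ∈ (univ.image v).erase (v i), (X - C b)

noncomputable def repeatedRootsProduct : K[X] :=
  ∏ b ∈ univ.image v, (X - C b) ^ (#{l | v l = b} - 1)

theorem monic_repeatedRootsProduct : (repeatedRootsProduct v).Monic :=
  monic_prod_of_monic _ _ fun b _ => (monic_X_sub_C b).pow _

theorem monic_deletedDistinctProduct (i : ι) : (deletedDistinctProduct v i).Monic :=
  monic_prod_of_monic _ _ fun b _ => monic_X_sub_C b

theorem eval_deletedDistinctProduct (i : ι) (a : K) :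
    (deletedDistinctProduct v i).eval a = ∏ b ∈ (univ.image v).erase (v i), (a - b) := by
  simp only [deletedDistinctProduct, eval_prod, eval_sub, eval_X, eval_C]

theorem eval_deletedDistinctProduct_self_ne_zero (i : ι) :
    (deletedDistinctProduct v i).eval (v i) ≠ 0 := by
  rw [eval_deletedDistinctProduct, prod_ne_zero_iff]
  exact fun b hb => sub_ne_zero.mpr (ne_of_mem_erase hb).symm

theorem eval_deletedDistinctProduct_eq_zero {i j : ι} (hij : v i ≠ v j) :
    (deletedDistinctProduct v i).eval (v j) = 0 := by
  rw [eval_deletedDistinctProduct]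
  exact prod_eq_zero (mem_erase.mpr ⟨hij.symm, mem_image_of_mem v (mem_univ j)⟩) (sub_self _)

theorem gcd_deletedDistinctProduct [Nonempty ι] : univ.gcd (deletedDistinctProduct v) = 1 := by
  obtain ⟨i₀⟩ := ‹Nonempty ι›
  refine gcd_eq_one_of_forall_exists_eval_ne_zero (mem_univ i₀)
    (Splits.prod fun b _ => Splits.X_sub_C _)
    (monic_deletedDistinctProduct v i₀).ne_zero fun a => ?_
  by_cases ha : a ∈ univ.image v
  · obtain ⟨l, -, rfl⟩ := mem_image.mp ha
    exact ⟨l, mem_univ l, eval_deletedDistinctProduct_self_ne_zero v l⟩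
  · refine ⟨i₀, mem_univ i₀, ?_⟩
    rw [eval_deletedDistinctProduct, prod_ne_zero_iff]
    exact fun b hb => sub_ne_zero.mpr fun hab => ha (hab ▸ mem_of_mem_erase hb)

theorem prod_X_sub_C_eq_repeatedRootsProduct_mul :
    ∏ l, (X - C (v l)) = repeatedRootsProduct v * ∏ b ∈ univ.image v, (X - C b) := by
  rw [prod_comp (fun b => X - C b) v, repeatedRootsProduct, ← prod_mul_distrib]
  refine prod_congr rfl fun b hb => ?_
  obtain ⟨l, -, rfl⟩ := mem_image.mp hb
  have hpos : 0 < #{l' | v l' = v l} := card_pos.mpr ⟨l, by simp⟩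
  rw [← pow_succ, Nat.sub_add_cancel hpos]

variable [DecidableEq ι]

noncomputable def deletedProduct (i : ι) : K[X] :=
  ∏ l ∈ univ.erase i, (X - C (v l))

theorem deletedProduct_eq_repeatedRootsProduct_mul (i : ι) :
    deletedProduct v i = repeatedRootsProduct v * deletedDistinctProduct v i := by
  apply mul_left_cancel₀ (X_sub_C_ne_zero (v i))
  rw [deletedProduct, mul_prod_erase _ (fun l => X - C (v l)) (mem_univ i),
    prod_X_sub_C_eq_repeatedRootsProduct_mul, deletedDistinctProduct, mul_left_comm,
    mul_prod_erase _ (fun b => X - C b) (mem_image_of_mem v (mem_univ i))]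

theorem gcd_deletedProduct [Nonempty ι] :
    univ.gcd (deletedProduct v) = repeatedRootsProduct v := by
  rw [funext (deletedProduct_eq_repeatedRootsProduct_mul v), Finset.gcd_mul_left,
    gcd_deletedDistinctProduct, mul_one, (monic_repeatedRootsProduct v).normalize_eq_self]

theorem deletedProduct_div_gcd (i : ι) :
    deletedProduct v i / univ.gcd (deletedProduct v) = deletedDistinctProduct v i := by
  have : Nonempty ι := ⟨i⟩
  rw [gcd_deletedProduct, deletedProduct_eq_repeatedRootsProduct_mul,
    mul_div_cancel_left₀ _ (monic_repeatedRootsProduct v).ne_zero]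

end DeletedProduct

/-- For `v : Fin n → K`, `p_{i,v}(T) = ∏_{l ≠ i} (T - v l)` and
`D_v` the monic gcd of the `p_{i,v}`, evaluation of `p_{i,v} / D_v` at `v j`
gives `∏_{b ≠ v j} (v j - b)` (a nonzero value, independent of the choice of `i`
with `v i = v j`) when `v i = v j`, and gives `0` when `v i ≠ v j`. -/
theorem eval_deleted_product_div_gcd {K : Type*} [Field K] [DecidableEq K] {n : ℕ}
    (v : Fin n → K) :
    ∀ i j : Fin n,
      (v i = v j →
        ((∏ l ∈ Finset.univ.erase i, (X - C (v l))) /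
            Finset.gcd Finset.univ
              (fun i : Fin n => ∏ l ∈ Finset.univ.erase i, (X - C (v l)))).eval (v j) =
          (∏ b ∈ (Finset.univ.image v).erase (v j), (v j - b)) ∧
        ((∏ l ∈ Finset.univ.erase i, (X - C (v l))) /
            Finset.gcd Finset.univ
              (fun i : Fin n => ∏ l ∈ Finset.univ.erase i, (X - C (v l)))).eval (v j) ≠ 0) ∧
      (v i ≠ v j →
        ((∏ l ∈ Finset.univ.erase i, (X - C (v l))) /
            Finset.gcd Finset.univ
              (fun i : Fin n => ∏ l ∈ Finset.univ.erase i, (X - C (v l)))).eval (v j) = 0) := by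
  intro i j
  simp only [← deletedProduct.eq_1, deletedProduct_div_gcd]
  refine ⟨fun hij => ?_, eval_deletedDistinctProduct_eq_zero v⟩
  rw [← hij]
  exact ⟨eval_deletedDistinctProduct v i _, eval_deletedDistinctProduct_self_ne_zero v i⟩
end

section
/- Let K be a field and let v = (v_1,…,v_n), w = (w_1,…,w_n) ∈ K^n. There exist a permutation σ of {1,…,n} and a scalar λ ∈ K∖{0} such that w = λ·(σ*v) if and only if there exists c ∈ K∖{0} such that q_i(w) = c^{n−i}·q_i(v) for all i = 0,…,n. -/
/-! The coefficient condition says exactly that `Q_w` is `Q_v.scaleRoots c`, and scaling the roots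
of `Q_v` by `c` gives `Q_{c • v}`. Over a domain, `∏ (X - C (u j))` determines the multiset of
the `u j`, and two families with the same multiset of values differ by a permutation. -/

open Polynomial

theorem Fintype.exists_perm_of_map_univ_val_eq {ι α : Type*} [Fintype ι] {w u : ι → α}
    (h : Finset.univ.val.map w = Finset.univ.val.map u) :
    ∃ σ : Equiv.Perm ι, w = u ∘ σ := by
  classical
  have hfiber : ∀ a, Fintype.card {i // w i = a} = Fintype.card {i // u i = a} := by
    intro a
    have := congrArg (Multiset.count a) h
    simp only [Multiset.count_map] at this
    rw [Fintype.card_subtype, Fintype.card_subtype]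
    simpa [Finset.filter, Finset.card, eq_comm] using this
  exact ⟨Equiv.ofFiberEquiv fun a => Fintype.equivOfCardEq (hfiber a),
    funext fun i => (Equiv.ofFiberEquiv_map _ i).symm⟩

namespace Polynomial

theorem scaleRoots_prod_X_sub_C {R ι : Type*} [CommRing R] (s : Finset ι) (v : ι → R) (c : R) :
    (∏ j ∈ s, (X - C (v j))).scaleRoots c = ∏ j ∈ s, (X - C (v j * c)) := by
  classical
  nontriviality R
  induction s using Finset.induction_on with
  | empty => simp
  | insert a s ha ih =>
    have hmonic : (∏ j ∈ s, (X - C (v j))).Monic :=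
      monic_prod_of_monic _ _ fun j _ => monic_X_sub_C _
    rw [Finset.prod_insert ha, Finset.prod_insert ha, mul_scaleRoots', X_sub_C_scaleRoots, ih]
    simp [hmonic.leadingCoeff]

theorem roots_finset_prod_X_sub_C {R ι : Type*} [CommRing R] [IsDomain R] (s : Finset ι)
    (v : ι → R) : (∏ j ∈ s, (X - C (v j))).roots = s.val.map v := by
  rw [Finset.prod, ← (X - C ·).comp_def v, ← Multiset.map_map, roots_multiset_prod_X_sub_C]

theorem prod_X_sub_C_eq_prod_X_sub_C_iff {R ι : Type*} [CommRing R] [IsDomain R] [Fintype ι]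
    {w u : ι → R} :
    ∏ j, (X - C (w j)) = ∏ j, (X - C (u j)) ↔ ∃ σ : Equiv.Perm ι, w = u ∘ σ := by
  refine ⟨fun h => ?_, ?_⟩
  · apply Fintype.exists_perm_of_map_univ_val_eq
    rw [← roots_finset_prod_X_sub_C, h, roots_finset_prod_X_sub_C]
  · rintro ⟨σ, rfl⟩
    exact Equiv.prod_comp σ fun j => X - C (u j)

end Polynomial

/-- For `v w : Fin n → K`, there exist a permutation `σ` and a
nonzero scalar `λ` with `w = λ • (σ * v)` (where `(σ * v) i = v (σ i)`) iff
there is `c ≠ 0` with `q_i(w) = c^(n-i) * q_i(v)` for all `i = 0, …, n`, where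
`q_i(v)` is the coefficient of `T^i` in `Q_v(T) = ∏ (T - v i)`. -/
theorem proj_perm_iff_coeff_scaled {K : Type*} [Field K] {n : ℕ} (v w : Fin n → K) :
    (∃ (σ : Equiv.Perm (Fin n)) (lam : K), lam ≠ 0 ∧ w = fun i => lam * v (σ i)) ↔
      (∃ c : K, c ≠ 0 ∧ ∀ i ≤ n,
        (∏ j : Fin n, (X - C (w j))).coeff i =
          c ^ (n - i) * (∏ j : Fin n, (X - C (v j))).coeff i) := by
  have hdeg (u : Fin n → K) : (∏ j, (X - C (u j))).natDegree = n := by simp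
  calc _ ↔ ∃ c : K, c ≠ 0 ∧ ∏ j, (X - C (w j)) = (∏ j, (X - C (v j))).scaleRoots c := by
        simp_rw [scaleRoots_prod_X_sub_C, prod_X_sub_C_eq_prod_X_sub_C_iff, mul_comm _ (_ : K)]
        constructor
        · rintro ⟨σ, c, hc, rfl⟩
          exact ⟨c, hc, σ, rfl⟩
        · rintro ⟨c, hc, σ, rfl⟩
          exact ⟨σ, c, hc, rfl⟩
    _ ↔ _ := by
        refine exists_congr fun c => and_congr_right fun _ => ?_
        rw [ext_iff_natDegree_le (hdeg w).le ((natDegree_scaleRoots _ c).trans (hdeg v)).le]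
        simp only [coeff_scaleRoots, hdeg, mul_comm]
end

section
/- Let K be a field, let v, w ∈ K^n, let c ∈ K∖{0}, and let σ be a permutation of {1,…,n} such that w = c·(σ*v). Suppose v has weight d (exactly d nonzero entries) and that some entry of v equals 1. Then Σ_{j=0}^{d} (−1)^{d−j} · e_j(w_1,…,w_n) · c^{d−j} = 0, where e_j is the j-th elementary symmetric polynomial in n variables (with e_0 = 1). -/
/-! Restricted to the support `T` of `σ * v` (which has `d` elements and carries all nonzero
entries of `w`), the alternating sum is the expansion of `∏_{i ∈ T} (w i - c)`. The entry of `v`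
equal to `1` gives a factor `c * 1 - c = 0`. -/

open Finset

namespace Finset

variable {ι R : Type*}

theorem prod_sub_const_eq_sum_powersetCard [CommRing R] (s : Finset ι) (f : ι → R) (c : R) :
    ∏ i ∈ s, (f i - c) =
      ∑ j ∈ range (#s + 1),
        (-1 : R) ^ (#s - j) * (∑ t ∈ powersetCard j s, ∏ i ∈ t, f i) * c ^ (#s - j) := by
  classical
  simp_rw [sub_eq_add_neg, prod_add, prod_const, sum_powerset, mul_sum, sum_mul]
  refine sum_congr rfl fun j _ => sum_congr rfl fun t ht => ?_
  obtain ⟨hts, rfl⟩ := mem_powersetCard.mp ht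
  rw [card_sdiff_of_subset hts, neg_pow]
  ring

theorem sum_powersetCard_prod_eq_of_subset [CommSemiring R] {s t : Finset ι} (hst : s ⊆ t) {f : ι → R}
    (hf : ∀ i ∈ t, f i ≠ 0 → i ∈ s) (j : ℕ) :
    ∑ u ∈ powersetCard j t, ∏ i ∈ u, f i = ∑ u ∈ powersetCard j s, ∏ i ∈ u, f i := by
  refine (sum_subset (powersetCard_mono hst) fun u hut hus => ?_).symm
  obtain ⟨hut, hcard⟩ := mem_powersetCard.mp hut
  obtain ⟨i, hiu, his⟩ := not_subset.mp fun h => hus (mem_powersetCard.mpr ⟨h, hcard⟩)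
  exact prod_eq_zero hiu (not_not.mp fun hi => his (hf i (hut hiu) hi))

end Finset

theorem esymm_alternating_sum_eq_zero_general {K : Type*} [Field K] [DecidableEq K] {n d : ℕ}
    (v w : Fin n → K) (c : K) (σ : Equiv.Perm (Fin n))
    (hw : w = fun i => c * v (σ i))
    (hd : (Finset.univ.filter (fun i => v i ≠ 0)).card = d)
    (hone : ∃ i, v i = 1) :
    ∑ j ∈ Finset.range (d + 1),
        (-1 : K) ^ (d - j) *
          (∑ s ∈ Finset.powersetCard j (Finset.univ : Finset (Fin n)), ∏ i ∈ s, w i) *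
          c ^ (d - j) = 0 := by
  subst hw
  set T := univ.filter fun i => v (σ i) ≠ 0
  have hT : #T = d := by
    rw [← hd]
    exact card_equiv σ fun i => by simp [T]
  have hsupp : ∀ i ∈ univ, c * v (σ i) ≠ 0 → i ∈ T := fun i _ h => by
    simpa [T] using right_ne_zero_of_mul h
  obtain ⟨i₀, hi₀⟩ := hone
  calc _ = ∏ i ∈ T, (c * v (σ i) - c) := by
        simp_rw [prod_sub_const_eq_sum_powersetCard, hT,
          sum_powersetCard_prod_eq_of_subset (subset_univ T) hsupp]
    _ = 0 := prod_eq_zero (i := σ.symm i₀) (by simp [T, hi₀]) (by simp [hi₀])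

/-- Suppose `w = c • (σ * v)` with `c ≠ 0` (where
`(σ * v) i = v (σ i)`), `v` has weight `d`, and some entry of `v` equals `1`.
Then `∑_{j=0}^{d} (-1)^(d-j) e_j(w) c^(d-j) = 0`, where `e_j` is the `j`-th
elementary symmetric polynomial (with `e_0 = 1`). -/
theorem esymm_alternating_sum_eq_zero {K : Type*} [Field K] [DecidableEq K] {n d : ℕ}
    (v w : Fin n → K) (c : K) (hc : c ≠ 0) (σ : Equiv.Perm (Fin n))
    (hw : w = fun i => c * v (σ i))
    (hd : (Finset.univ.filter (fun i => v i ≠ 0)).card = d)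
    (hone : ∃ i, v i = 1) :
    ∑ j ∈ Finset.range (d + 1),
        (-1 : K) ^ (d - j) *
          (∑ s ∈ Finset.powersetCard j (Finset.univ : Finset (Fin n)), ∏ i ∈ s, w i) *
          c ^ (d - j) = 0 :=
  esymm_alternating_sum_eq_zero_general v w c σ hw hd hone
end

section
/- Let F_q be a finite field with q elements, let n = q−1, let α ∈ F_q be an element of multiplicative order n (a primitive element), let 1 ≤ d < n, and let g(x) = (x−α)(x−α^2)⋯(x−α^{d−1}) ∈ F_q[x]. Then every nonzero polynomial f ∈ F_q[x] with deg f < n that is divisible by g has at least d nonzero coefficients. -/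
/-!
If `f` vanishes at `β, β², …, β^m` and the monomials of `f` are `X^{e₁}, …, X^{eₛ}` with
`s ≤ m`, the first `s` of these equations say that the coefficient vector
`(f_{e_j} β^{e_j})_j` lies in the left kernel of the Vandermonde matrix of the nodes
`β^{e₁}, …, β^{eₛ}`. When these nodes are distinct and `β ≠ 0`, this forces every coefficient
of `f` to vanish. For `α` of order `n` and `deg f < n` the nodes are distinct, and `g ∣ f`
supplies the roots `α, …, α^{d-1}`.
-/

open Polynomial Finset

namespace Polynomial

variable {R : Type*} [CommRing R]

theorem eval_eq_sum_support_equivFin (f : R[X]) (x : R) :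
    f.eval x = ∑ j, f.coeff (f.support.equivFin.symm j) * x ^ (f.support.equivFin.symm j : ℕ) := by
  rw [eval_eq_sum, sum_def, ← sum_coe_sort f.support, ← Equiv.sum_comp f.support.equivFin.symm]

theorem lt_card_support_of_eval_pow_eq_zero [IsDomain R] {f : R[X]} (hf : f ≠ 0) {β : R}
    (hβ : β ≠ 0) (hinj : Set.InjOn (β ^ ·) f.support) {m : ℕ}
    (hroots : ∀ k ∈ Icc 1 m, f.eval (β ^ k) = 0) : m < #f.support := by
  by_contra! hsm
  set e := f.support.equivFin.symm
  have hweights : (fun j => f.coeff (e j) * β ^ (e j : ℕ)) = 0 := by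
    refine Matrix.eq_zero_of_forall_pow_sum_mul_pow_eq_zero (f := fun j => β ^ (e j : ℕ))
      ((Set.injOn_iff_injective.mp hinj).comp e.injective) fun i => ?_
    calc ∑ j, f.coeff (e j) * β ^ (e j : ℕ) * (β ^ (e j : ℕ)) ^ (i : ℕ)
        = ∑ j, f.coeff (e j) * (β ^ ((i : ℕ) + 1)) ^ (e j : ℕ) := by
          refine sum_congr rfl fun j _ => ?_
          rw [← pow_mul, ← pow_mul, mul_assoc, ← pow_add]
          ring
      _ = f.eval (β ^ ((i : ℕ) + 1)) := (eval_eq_sum_support_equivFin f _).symm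
      _ = 0 := hroots _ (mem_Icc.mpr ⟨le_add_self, by omega⟩)
  obtain ⟨k, hk⟩ := support_nonempty.mpr hf
  have := congrFun hweights (e.symm ⟨k, hk⟩)
  simp only [Equiv.apply_symm_apply, Pi.zero_apply, mul_eq_zero, pow_eq_zero_iff', hβ,
    false_and, or_false] at this
  exact mem_support_iff.mp hk this

end Polynomial

theorem reed_solomon_bch_bound_general {F : Type*} [Field F] {n d : ℕ}
    (α : F) (hα : orderOf α = n)
    (f : F[X]) (hf0 : f ≠ 0) (hfdeg : f.natDegree < n)
    (hdvd : (∏ i ∈ Finset.Icc 1 (d - 1), (X - C (α ^ i))) ∣ f) :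
    d ≤ f.support.card := by
  have hα0 : α ≠ 0 := by
    rintro rfl
    rw [orderOf_eq_zero_iff'.mpr fun k hk => by simp [zero_pow hk.ne']] at hα
    omega
  have hinj : Set.InjOn (α ^ ·) f.support := pow_injOn_Iio_orderOf.mono fun k hk =>
    hα ▸ (le_natDegree_of_mem_supp k hk).trans_lt hfdeg
  have hroots : ∀ k ∈ Icc 1 (d - 1), f.eval (α ^ k) = 0 := fun k hk =>
    eval_eq_zero_of_dvd_of_eval_eq_zero hdvd <| by
      rw [eval_prod]
      exact prod_eq_zero hk (by simp)
  have := lt_card_support_of_eval_pow_eq_zero hf0 hα0 hinj hroots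
  omega

/-- **BCH bound for Reed–Solomon codes.** Let `F` be a finite
field with `q` elements, `n = q - 1`, `α` of multiplicative order `n`,
`1 ≤ d < n`, and `g(x) = (x - α)(x - α²)⋯(x - α^(d-1))`. Then every nonzero
polynomial `f` of degree `< n` divisible by `g` has at least `d` nonzero
coefficients. -/
theorem reed_solomon_bch_bound {F : Type*} [Field F] [Fintype F] {q n d : ℕ}
    (hq : Fintype.card F = q) (hn : n = q - 1) (α : F) (hα : orderOf α = n)
    (hd1 : 1 ≤ d) (hdn : d < n)
    (f : F[X]) (hf0 : f ≠ 0) (hfdeg : f.natDegree < n)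
    (hdvd : (∏ i ∈ Finset.Icc 1 (d - 1), (X - C (α ^ i))) ∣ f) :
    d ≤ f.support.card :=
  reed_solomon_bch_bound_general α hα f hf0 hfdeg hdvd
end

section
/- Let F_q be a finite field with q elements, let n = q−1, let α ∈ F_q be an element of multiplicative order n, let 1 ≤ d < n, and let g(x) = (x−α)(x−α^2)⋯(x−α^{d−1}) = g_0 + g_1x + ⋯ + g_{d−2}x^{d−2} + x^{d−1} ∈ F_q[x]. Then all of the coefficients g_0, g_1, …, g_{d−2} are nonzero (so g has exactly d nonzero coefficients). -/
/-!
Write `g = ∏_{i=1}^m (X - α^i)`. Substituting `αX` shifts the roots down by one step, which gives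
`g(αX) (X - α^m) = α^m g(X) (X - 1)`. Comparing coefficients of `X^(k+1)` yields
`g_k (α^k - α^m) = α^m (α^(k+1) - 1) g_(k+1)`. Since the order of `α` exceeds `m`, `α^k ≠ α^m`
for `k < m`, so a nonzero `g_k` forces `g_(k+1) ≠ 0`. Starting from `g_0 = ∏ (-α^i) ≠ 0`, every
coefficient up to `X^m` is nonzero.
-/

open Polynomial Finset

section CommRing

variable {R : Type*} [CommRing R]

theorem prod_X_sub_C_pow_comp_C_mul_X_mul (α : R) (m : ℕ) :
    (∏ i ∈ Icc 1 m, (X - C (α ^ i))).comp (C α * X) * (X - C (α ^ m)) =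
      C (α ^ m) * ((∏ i ∈ Icc 1 m, (X - C (α ^ i))) * (X - C 1)) := by
  induction m with
  | zero => simp
  | succ m ih =>
    have hshift : (X - C (α ^ (m + 1))).comp (C α * X) = C α * (X - C (α ^ m)) := by
      simp only [sub_comp, X_comp, C_comp, mul_sub, ← C_mul, pow_succ']
    have hC : C (α ^ (m + 1)) = C α * C (α ^ m) := by rw [pow_succ', C_mul]
    rw [prod_Icc_succ_top (by omega), mul_comp, hshift]
    linear_combination (C α * (X - C (α ^ (m + 1)))) * ih -
      (∏ i ∈ Icc 1 m, (X - C (α ^ i))) * (X - C (α ^ (m + 1))) * (X - C 1) * hC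

theorem coeff_prod_X_sub_C_pow_mul_sub (α : R) (m k : ℕ) :
    (∏ i ∈ Icc 1 m, (X - C (α ^ i))).coeff k * (α ^ k - α ^ m) =
      α ^ m * (α ^ (k + 1) - 1) * (∏ i ∈ Icc 1 m, (X - C (α ^ i))).coeff (k + 1) := by
  have h := congrArg (coeff · (k + 1)) (prod_X_sub_C_pow_comp_C_mul_X_mul α m)
  simp only [coeff_mul_X_sub_C, coeff_C_mul, comp_C_mul_X_coeff] at h
  linear_combination h

end CommRing

section IsDomain

variable {R : Type*} [CommRing R] [IsDomain R]

theorem coeff_prod_X_sub_C_pow_ne_zero {α : R} {m : ℕ} (hα : α ≠ 0)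
    (hpow : ∀ k < m, α ^ k ≠ α ^ m) {i : ℕ} (hi : i ≤ m) :
    (∏ i ∈ Icc 1 m, (X - C (α ^ i))).coeff i ≠ 0 := by
  induction i with
  | zero =>
    rw [coeff_zero_eq_eval_zero, eval_prod]
    simp [prod_ne_zero_iff, hα]
  | succ k ih =>
    intro hzero
    have hrec := coeff_prod_X_sub_C_pow_mul_sub α m k
    rw [hzero, mul_zero] at hrec
    exact mul_ne_zero (ih (by omega)) (sub_ne_zero.mpr (hpow k (by omega))) hrec

theorem support_prod_X_sub_C_pow {α : R} {m : ℕ} (hα : α ≠ 0)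
    (hpow : ∀ k < m, α ^ k ≠ α ^ m) :
    (∏ i ∈ Icc 1 m, (X - C (α ^ i))).support = range (m + 1) := by
  have hdeg : (∏ i ∈ Icc 1 m, (X - C (α ^ i))).natDegree = m := by
    rw [natDegree_prod _ _ fun i _ ↦ X_sub_C_ne_zero (α ^ i)]
    simp only [natDegree_X_sub_C, sum_const, Nat.card_Icc, smul_eq_mul, mul_one,
      Nat.add_sub_cancel]
  ext i
  rw [mem_support_iff, mem_range]
  refine ⟨fun h ↦ ?_, fun h ↦ coeff_prod_X_sub_C_pow_ne_zero hα hpow (by omega)⟩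
  by_contra hi
  exact h (coeff_eq_zero_of_natDegree_lt (by omega))

end IsDomain

theorem reed_solomon_generator_coeffs_ne_zero_general {F : Type*} [Field F]
    {n d : ℕ} (α : F) (hα : orderOf α = n)
    (hd1 : 1 ≤ d) (hdn : d < n) :
    (∀ i < d - 1, (∏ i ∈ Finset.Icc 1 (d - 1), (X - C (α ^ i))).coeff i ≠ 0) ∧
      (∏ i ∈ Finset.Icc 1 (d - 1), (X - C (α ^ i))).support.card = d := by
  have horder : d - 1 < orderOf α := by omega
  have hα0 : α ≠ 0 := by
    rintro rfl
    simp at hα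
    omega
  have hpow : ∀ k < d - 1, α ^ k ≠ α ^ (d - 1) := fun k hk h ↦
    hk.ne (pow_injOn_Iio_orderOf (hk.trans horder) horder h)
  refine ⟨fun i hi ↦ coeff_prod_X_sub_C_pow_ne_zero hα0 hpow hi.le, ?_⟩
  rw [support_prod_X_sub_C_pow hα0 hpow, card_range]
  omega

/-- With `F` a finite field with `q` elements, `n = q - 1`,
`α` of multiplicative order `n`, `1 ≤ d < n` and
`g(x) = (x - α)(x - α²)⋯(x - α^(d-1)) = g₀ + g₁ x + ⋯ + g_{d-2} x^(d-2) + x^(d-1)`,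
all of the coefficients `g₀, …, g_{d-2}` are nonzero, so `g` has exactly `d`
nonzero coefficients. -/
theorem reed_solomon_generator_coeffs_ne_zero {F : Type*} [Field F] [Fintype F]
    {q n d : ℕ} (hq : Fintype.card F = q) (hn : n = q - 1) (α : F) (hα : orderOf α = n)
    (hd1 : 1 ≤ d) (hdn : d < n) :
    (∀ i < d - 1, (∏ i ∈ Finset.Icc 1 (d - 1), (X - C (α ^ i))).coeff i ≠ 0) ∧
      (∏ i ∈ Finset.Icc 1 (d - 1), (X - C (α ^ i))).support.card = d :=
  reed_solomon_generator_coeffs_ne_zero_general α hα hd1 hdn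
end

section
/- Let F_q be a finite field with q elements, let n = q−1, let α ∈ F_q be an element of multiplicative order n, let 1 ≤ d < n, and let g(x) = (x−α)(x−α^2)⋯(x−α^{d−1}) ∈ F_q[x]. Consider the Reed–Solomon code C = {f ∈ F_q[x] : deg f < n and g divides f}, viewed as a subspace of F_q^n via coefficient vectors. Then the minimum over all nonzero f ∈ C of the number of nonzero coefficients of f equals exactly d. -/
/-!
A nonzero polynomial with `w` monomials whose exponents have pairwise distinct powers `α ^ j` cannot
vanish at `β, βα, …, βα^(w-1)`: with `j` in its support, `f(αx) - α^j f(x)` has one monomial fewer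
and vanishes at the first `w - 1` of these points, so induction on `w` applies. A codeword divisible
by `g` vanishes at `α, …, α^(d-1)`, so it has at least `d` monomials, and `g` itself has at most
`deg g + 1 = d`.
-/

open Polynomial Finset

namespace Polynomial

variable {R : Type*} [CommRing R] [IsDomain R]

theorem support_comp_C_mul_X_sub_C_mul {f : R[X]} {α : R} {j : ℕ}
    (hinj : Set.InjOn (α ^ ·) f.support) (hj : j ∈ f.support) :
    (f.comp (C α * X) - C (α ^ j) * f).support = f.support.erase j := by
  ext k
  have hcoeff : (f.comp (C α * X) - C (α ^ j) * f).coeff k = f.coeff k * (α ^ k - α ^ j) := by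
    rw [coeff_sub, comp_C_mul_X_coeff, coeff_C_mul]
    ring
  rw [mem_support_iff, hcoeff, mem_erase, mul_ne_zero_iff, sub_ne_zero, ← mem_support_iff]
  constructor
  · rintro ⟨hk, hne⟩
    exact ⟨fun hkj => hne (hkj ▸ rfl), hk⟩
  · rintro ⟨hkj, hk⟩
    exact ⟨hk, fun hpow => hkj (hinj hk hj hpow)⟩

theorem eq_zero_of_eval_mul_pow_eq_zero {f : R[X]} {α β : R} (hβ : β ≠ 0)
    (hinj : Set.InjOn (α ^ ·) f.support) (hf : ∀ i < #f.support, f.eval (β * α ^ i) = 0) :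
    f = 0 := by
  induction hw : #f.support generalizing f with
  | zero => exact support_eq_empty.mp (card_eq_zero.mp hw)
  | succ w ih =>
    by_contra hf0
    have hj : f.natDegree ∈ f.support := natDegree_mem_support_of_nonzero hf0
    set g := f.comp (C α * X) - C (α ^ f.natDegree) * f
    have hsupp : g.support = f.support.erase f.natDegree := support_comp_C_mul_X_sub_C_mul hinj hj
    have hcard : #g.support = w := by rw [hsupp, card_erase_of_mem hj, hw, Nat.add_sub_cancel]
    have hg_eval (x : R) : g.eval x = f.eval (α * x) - α ^ f.natDegree * f.eval x := by
      simp only [g, eval_sub, eval_comp, eval_mul, eval_C, eval_X]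
    have hg0 : g = 0 := by
      refine ih (hsupp ▸ hinj.mono (coe_subset.mpr (erase_subset _ _))) (fun i hi => ?_) hcard
      rw [hg_eval, mul_left_comm, ← pow_succ', hf i (by omega), hf (i + 1) (by omega), mul_zero,
        sub_zero]
    have hle : #f.support ≤ 1 := by
      rw [← card_erase_add_one hj, ← hsupp, hg0, support_zero, card_empty]
    obtain ⟨k, a, rfl⟩ := card_support_le_one_iff_monomial.mp hle
    have h0 := hf 0 (by omega)
    rw [pow_zero, mul_one, eval_monomial, mul_eq_zero] at h0
    rw [h0.resolve_right (pow_ne_zero k hβ), monomial_zero_right] at hf0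
    exact hf0 rfl

theorem lt_card_support_of_prod_X_sub_C_pow_dvd {f : R[X]} {α : R} {m : ℕ} (hf0 : f ≠ 0)
    (hdeg : f.natDegree < orderOf α) (hdvd : ∏ i ∈ Icc 1 m, (X - C (α ^ i)) ∣ f) :
    m < #f.support := by
  by_contra! hle
  have hα : α ≠ 0 := (orderOf_pos_iff.mp (by omega)).isUnit.ne_zero
  have hinj : Set.InjOn (α ^ ·) f.support := pow_injOn_Iio_orderOf.mono fun k hk =>
    (le_natDegree_of_mem_supp k hk).trans_lt hdeg
  refine hf0 (eq_zero_of_eval_mul_pow_eq_zero hα hinj fun i hi => ?_)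
  rw [← pow_succ']
  refine eval_eq_zero_of_dvd_of_eval_eq_zero hdvd ?_
  rw [eval_prod]
  exact prod_eq_zero (i := i + 1) (mem_Icc.mpr ⟨by omega, by omega⟩) (by simp)

end Polynomial

theorem reed_solomon_min_distance_eq_general {F : Type*} [Field F] {n d : ℕ}
    (α : F) (hα : orderOf α = n)
    (hd1 : 1 ≤ d) (hdn : d < n) :
    IsLeast {m : ℕ | ∃ f : F[X], f ≠ 0 ∧ f.natDegree < n ∧
      (∏ i ∈ Finset.Icc 1 (d - 1), (X - C (α ^ i))) ∣ f ∧ f.support.card = m} d := by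
  set g : F[X] := ∏ i ∈ Icc 1 (d - 1), (X - C (α ^ i))
  have hg_monic : g.Monic := monic_prod_of_monic _ _ fun i _ => monic_X_sub_C _
  have hg_deg : g.natDegree = d - 1 := by
    rw [natDegree_finsetProd_X_sub_C_eq_card, Nat.card_Icc, Nat.add_sub_cancel]
  have hweight {f : F[X]} (hf0 : f ≠ 0) (hdeg : f.natDegree < n) (hdvd : g ∣ f) :
      d ≤ #f.support := by
    have := lt_card_support_of_prod_X_sub_C_pow_dvd hf0 (hα ▸ hdeg) hdvd
    omega
  refine ⟨⟨g, hg_monic.ne_zero, by omega, dvd_rfl, ?_⟩, ?_⟩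
  · exact le_antisymm ((card_supp_le_succ_natDegree g).trans (by omega))
      (hweight hg_monic.ne_zero (by omega) dvd_rfl)
  · rintro m ⟨f, hf0, hdeg, hdvd, rfl⟩
    exact hweight hf0 hdeg hdvd

/-- With `F` a finite field with `q` elements, `n = q - 1`,
`α` of multiplicative order `n`, `1 ≤ d < n` and
`g(x) = (x - α)(x - α²)⋯(x - α^(d-1))`, the minimum number of nonzero
coefficients of a nonzero polynomial `f` with `deg f < n` divisible by `g`
(i.e. the minimum distance of the Reed–Solomon code) is exactly `d`. -/
theorem reed_solomon_min_distance_eq {F : Type*} [Field F] [Fintype F] {q n d : ℕ}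
    (hq : Fintype.card F = q) (hn : n = q - 1) (α : F) (hα : orderOf α = n)
    (hd1 : 1 ≤ d) (hdn : d < n) :
    IsLeast {m : ℕ | ∃ f : F[X], f ≠ 0 ∧ f.natDegree < n ∧
      (∏ i ∈ Finset.Icc 1 (d - 1), (X - C (α ^ i))) ∣ f ∧ f.support.card = m} d :=
  reed_solomon_min_distance_eq_general α hα hd1 hdn
end
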